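/- Every nonempty word over {a, b, c} represents a nontrivial permutation of X^ℕ: if s₁, s₂, …, s_n ∈ {a, b, c} with n ≥ 1, then the composition s₁s₂⋯s_n is not the identity permutation of X^ℕ. -/

import Mathlib

/-!
We formalize the automaton `A` of the paper: alphabet `X = {1,2,3}` is encoded as
`Fin 3` (letter `i+1` ↦ `i`), states `a, b, c` are encoded as `0, 1, 2 : Fin 3`.
Each state induces a permutation of the space `ℕ → Fin 3` of infinite sequences.

Note on conventions: in the paper, products of tree automorphisms compose
left-to-right (in a word `s₁s₂⋯sₙ`, the letter `s₁` acts first); in Mathlib,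
`(f * g) w = f (g w)`, i.e. the right factor acts first.  Hence a paper word
`uv` is rendered as the Lean product `v * u`; e.g. the paper's `α = ab⁻¹`
(apply `a`, then `b⁻¹`) is `b⁻¹ * a` below.
-/

namespace Lamplighter

section Generic

variable {S X : Type*}

/-- The state of the automaton after reading the first `n` letters of `w`, starting at `s`. -/
def run (nxt : S → X → S) (s : S) (w : ℕ → X) : ℕ → S
  | 0 => s
  | n + 1 => nxt (run nxt s w n) (w n)

/-- The output sequence of the automaton started in state `s` reading `w`. -/
def fwd (nxt : S → X → S) (out : S → Equiv.Perm X) (s : S) (w : ℕ → X) : ℕ → X :=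
  fun n => out (run nxt s w n) (w n)

/-- Transition function of the inverse automaton. -/
def invNxt (nxt : S → X → S) (out : S → Equiv.Perm X) (s : S) (y : X) : S :=
  nxt s ((out s).symm y)

/-- The action of the inverse automaton, started at state `s`. -/
def bwd (nxt : S → X → S) (out : S → Equiv.Perm X) (s : S) (y : ℕ → X) : ℕ → X :=
  fun n => (out (run (invNxt nxt out) s y n)).symm (y n)

theorem run_inv_fwd (nxt : S → X → S) (out : S → Equiv.Perm X) (s : S) (w : ℕ → X) :
    ∀ n, run (invNxt nxt out) s (fwd nxt out s w) n = run nxt s w n := by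
  intro n
  induction n with
  | zero => rfl
  | succ n ih => simp [run, ih, invNxt, fwd]

theorem run_bwd (nxt : S → X → S) (out : S → Equiv.Perm X) (s : S) (y : ℕ → X) :
    ∀ n, run nxt s (bwd nxt out s y) n = run (invNxt nxt out) s y n := by
  intro n
  induction n with
  | zero => rfl
  | succ n ih => simp [run, ih, bwd, invNxt]

/-- The permutation of the space of infinite sequences induced by state `s`
of an invertible automaton. -/
def statePerm (nxt : S → X → S) (out : S → Equiv.Perm X) (s : S) : Equiv.Perm (ℕ → X) where
  toFun := fwd nxt out s
  invFun := bwd nxt out s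
  left_inv := fun w => funext fun n => by simp [bwd, run_inv_fwd, fwd]
  right_inv := fun y => funext fun n => by simp [fwd, run_bwd, bwd]

end Generic

/-- The alphabet `X = {1,2,3}`, encoded as `Fin 3`. -/
abbrev X3 := Fin 3

/-- Transition function of the automaton `A` (states `a = 0`, `b = 1`, `c = 2`):
from `a`: `1 ↦ a, 2 ↦ b, 3 ↦ c`; from `b`: `1 ↦ c, 2 ↦ a, 3 ↦ b`;
from `c`: `1 ↦ b, 2 ↦ c, 3 ↦ a`. -/
def nxtA : Fin 3 → X3 → Fin 3 := ![![0, 1, 2], ![2, 0, 1], ![1, 2, 0]]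

/-- Output permutations of the automaton `A`: state `a` acts on letters as the
transposition `(2 3)`, state `b` as `(1 3)`, state `c` as `(1 2)`. -/
def outA : Fin 3 → Equiv.Perm X3 := ![Equiv.swap 1 2, Equiv.swap 0 2, Equiv.swap 0 1]

/-- The permutation of `X^ℕ` given by state `a`. -/
def a : Equiv.Perm (ℕ → X3) := statePerm nxtA outA 0

/-- The permutation of `X^ℕ` given by state `b`. -/
def b : Equiv.Perm (ℕ → X3) := statePerm nxtA outA 1

/-- The permutation of `X^ℕ` given by state `c`. -/
def c : Equiv.Perm (ℕ → X3) := statePerm nxtA outA 2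

/-- The group `G_A` generated by the automaton `A`. -/
def GA : Subgroup (Equiv.Perm (ℕ → X3)) := Subgroup.closure {a, b, c}

/-- The element `α = ab⁻¹` of the paper (first apply `a`, then `b⁻¹`). -/
def α : Equiv.Perm (ℕ → X3) := b⁻¹ * a

/-- The set `W` of permutations acting coordinatewise by a sequence of even
permutations of the alphabet. -/
def W : Set (Equiv.Perm (ℕ → X3)) :=
  {g | ∃ π : ℕ → Equiv.Perm X3, (∀ n, Equiv.Perm.sign (π n) = 1) ∧
    ∀ (w : ℕ → X3) (n : ℕ), g w n = π n (w n)}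

/-- The subgroup `N` generated by the conjugates `a⁻ⁿ α aⁿ`, `n ∈ ℤ`
(in Lean's composition order: `aⁿ * α * a⁻ⁿ`). -/
def N : Subgroup (Equiv.Perm (ℕ → X3)) :=
  Subgroup.closure {g | ∃ n : ℤ, g = a ^ n * α * a ^ (-n)}

/-!
Read `X3` as `𝔽₃`. State `s` then outputs `-s - x` on input `x` and moves to state `x - s`.
Encoding a sequence `w` by its generating series `mk w`, each generator `g` is affine,
with the same linear part `(X - 1) / (1 + X)`: `(1 + X) (g u - g v) = (X - 1) (u - v)`.
A word of length `k ≥ 1` has linear part `((X - 1) / (1 + X))ᵏ`, so if it were trivial then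
`(1 + X)ᵏ = (X - 1)ᵏ`; at `X = -1` this reads `0 = (-2)ᵏ = 1`.
-/

open PowerSeries

section LinearPart

variable {R : Type*} [CommRing R] {P Q : R⟦X⟧}

theorem pow_length_mul_mk_sub {l : List (Equiv.Perm (ℕ → R))}
    (hl : ∀ g ∈ l, ∀ u v, P * mk (g u - g v) = Q * mk (u - v)) (u v : ℕ → R) :
    P ^ l.length * mk (l.prod u - l.prod v) = Q ^ l.length * mk (u - v) := by
  induction l generalizing u v with
  | nil => simp
  | cons g l ih =>
    rw [List.forall_mem_cons] at hl
    calc P ^ (l.length + 1) * mk (g (l.prod u) - g (l.prod v))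
        = P ^ l.length * (P * mk (g (l.prod u) - g (l.prod v))) := by ring
      _ = Q * (P ^ l.length * mk (l.prod u - l.prod v)) := by rw [hl.1]; ring
      _ = Q ^ (l.length + 1) * mk (u - v) := by rw [ih hl.2]; ring

theorem pow_length_eq_of_prod_eq_one {l : List (Equiv.Perm (ℕ → R))}
    (hl : ∀ g ∈ l, ∀ u v, P * mk (g u - g v) = Q * mk (u - v)) (h : l.prod = 1) :
    P ^ l.length = Q ^ l.length := by
  have hone : mk (fun n => coeff n (1 : R⟦X⟧)) = 1 := ext fun n => coeff_mk _ _
  have key := pow_length_mul_mk_sub hl (fun n => coeff n 1) 0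
  simpa only [h, Equiv.Perm.one_apply, sub_zero, hone, mul_one] using key

theorem one_add_X_pow_ne_X_sub_one_pow (h2 : ¬IsNilpotent (2 : R)) {k : ℕ} (hk : k ≠ 0) :
    (1 + X : R⟦X⟧) ^ k ≠ (X - 1) ^ k := by
  intro h
  have hpoly : ((1 + Polynomial.X : Polynomial R) ^ k) = (Polynomial.X - 1) ^ k := by
    rw [← Polynomial.coe_inj]
    push_cast
    exact h
  have heval := congrArg (Polynomial.eval (-1)) hpoly
  simp only [Polynomial.eval_pow, Polynomial.eval_add, Polynomial.eval_sub,
    Polynomial.eval_one, Polynomial.eval_X, add_neg_cancel, zero_pow hk] at heval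
  exact h2 (isNilpotent_neg_iff.mp ⟨k, by rw [heval]; ring⟩)

end LinearPart

theorem statePerm_apply {S X : Type*} (nxt : S → X → S) (out : S → Equiv.Perm X) (s : S)
    (w : ℕ → X) (n : ℕ) : statePerm nxt out s w n = out (run nxt s w n) (w n) :=
  rfl

open Fin.CommRing

theorem outA_apply (s x : Fin 3) : outA s x = -s - x := by revert s x; decide

theorem nxtA_apply (s x : Fin 3) : nxtA s x = x - s := by revert s x; decide

theorem run_nxtA_sub_succ (s : Fin 3) (u v : ℕ → X3) (n : ℕ) :
    run nxtA s u (n + 1) - run nxtA s v (n + 1)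
      = (u - v) n - (run nxtA s u n - run nxtA s v n) := by
  simp only [run, nxtA_apply, Pi.sub_apply]
  ring

theorem one_add_X_mul_mk_run_sub (s : Fin 3) (u v : ℕ → X3) :
    (1 + X) * mk (run nxtA s u - run nxtA s v) = X * mk (u - v) := by
  ext n : 1
  cases n with
  | zero => simp [add_mul, run]
  | succ n =>
    rw [add_mul, one_mul, map_add, coeff_succ_X_mul, coeff_succ_X_mul, coeff_mk, coeff_mk, coeff_mk,
      Pi.sub_apply, Pi.sub_apply, run_nxtA_sub_succ]
    ring

theorem mk_statePerm_sub (s : Fin 3) (u v : ℕ → X3) :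
    mk (statePerm nxtA outA s u - statePerm nxtA outA s v)
      = -mk (run nxtA s u - run nxtA s v) - mk (u - v) := by
  ext n : 1
  simp only [coeff_mk, map_sub, map_neg, Pi.sub_apply, statePerm_apply, outA_apply]
  ring

theorem one_add_X_mul_mk_statePerm_sub (s : Fin 3) (u v : ℕ → X3) :
    (1 + X) * mk (statePerm nxtA outA s u - statePerm nxtA outA s v) = (X - 1) * mk (u - v) := by
  have h3 : (3 : X3⟦X⟧) = 0 := by
    rw [← map_ofNat (C (R := X3)) 3, show (3 : X3) = 0 by decide, map_zero]
  rw [mk_statePerm_sub, mul_sub, mul_neg, one_add_X_mul_mk_run_sub]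
  linear_combination (-X * mk (u - v)) * h3

/-- Every nonempty word over `{a, b, c}` represents a nontrivial
permutation of `X^ℕ`.  (The composition `s₁s₂⋯sₙ` applies `s₁` first, hence the
reversed Lean product; nontriviality is of course independent of the order.) -/
theorem nonempty_word_nontrivial :
    ∀ l : List (Fin 3), l ≠ [] →
      ((l.map (![a, b, c] : Fin 3 → Equiv.Perm (ℕ → X3))).reverse).prod ≠ 1 := by
  intro l hl h
  have hgen : ∀ g ∈ (l.map ![a, b, c]).reverse, ∀ u v,
      (1 + X) * mk (g u - g v) = (X - 1) * mk (u - v) := by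
    simp only [List.mem_reverse, List.mem_map]
    rintro _ ⟨s, -, rfl⟩ u v
    fin_cases s <;> exact one_add_X_mul_mk_statePerm_sub _ u v
  have h2 : ¬IsNilpotent (2 : X3) := (show (2 : X3) = -1 by decide) ▸ not_isNilpotent_neg_one
  refine one_add_X_pow_ne_X_sub_one_pow h2 ?_ (pow_length_eq_of_prod_eq_one hgen h)
  simpa using hl

end Lamplighter
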